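/- arXiv:1707.01196 — 6 statements merged into one kernel-verified Lean document; each statement's English description precedes it below -/
import Mathlib

section
/- The numbers w(t,k) of monic Temperley-Lieb diagrams from t to t+2k satisfy the recursion w(t, k+1) = w(t−1, k+1) + w(t+1, k) for all integers t, k ≥ 0 (interpreting w(−1, ·) = 0). -/
/-- Monic Temperley-Lieb diagrams from `t` to `t + 2k`, encoded as noncrossing
fixed-point-free involutions of the `2t + 2k` points `0, …, 2t+2k−1` (the first
`t` being bottom points) in which every bottom point is matched to a top point.
Noncrossing: any point lying strictly inside an arc has its partner strictly
inside that arc. -/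
def monicDiagrams (t k : ℕ) : Finset (Equiv.Perm (Fin (2 * t + 2 * k))) :=
  Finset.univ.filter fun f =>
    (∀ i, f (f i) = i) ∧ (∀ i, f i ≠ i) ∧
    (∀ i j : Fin (2 * t + 2 * k), i < j → j < f i → (i < f j ∧ f j < f i)) ∧
    (∀ i : Fin (2 * t + 2 * k), (i : ℕ) < t → t ≤ ((f i : Fin (2 * t + 2 * k)) : ℕ))

/-- `w(t,k)`, the number of monic diagrams from `t` to `t+2k`, extended by
`w(−1,·) = 0`. -/
def wCount (t : ℤ) (k : ℕ) : ℕ :=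
  if ht : 0 ≤ t then (monicDiagrams t.toNat k).card else 0

namespace TLAux

def P (n tt : ℕ) (f : Equiv.Perm (Fin n)) : Prop :=
  (∀ i, f (f i) = i) ∧ (∀ i, f i ≠ i) ∧
  (∀ i j : Fin n, i < j → j < f i → (i < f j ∧ f j < f i)) ∧
  (∀ i : Fin n, (i : ℕ) < tt → tt ≤ ((f i : Fin n) : ℕ))

instance (n tt : ℕ) : DecidablePred (P n tt) := fun f => by unfold P; infer_instance

def D (n tt : ℕ) : Finset (Equiv.Perm (Fin n)) := Finset.univ.filter (P n tt)

lemma mem_D {n tt : ℕ} {g : Equiv.Perm (Fin n)} : g ∈ D n tt ↔ P n tt g := by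
  simp [D]

lemma monic_eq (t k : ℕ) : monicDiagrams t k = D (2 * t + 2 * k) t := by
  ext f
  simp only [monicDiagrams, D, P, Finset.mem_filter, Finset.mem_univ, true_and]

lemma D_cast {n m : ℕ} (h : n = m) (tt : ℕ) : (D n tt).card = (D m tt).card := by
  subst h; rfl

/-- The order embedding of `Fin m` into `Fin (m+2)` skipping positions `s`, `s+1`. -/
def enc (m s : ℕ) (x : Fin m) : Fin (m + 2) :=
  ⟨if (x : ℕ) < s then (x : ℕ) else (x : ℕ) + 2, by have := x.isLt; split <;> omega⟩

/-- Partial inverse of `enc`. -/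
def dec (m s : ℕ) (hs : s + 1 ≤ m) (y : Fin (m + 2)) : Fin m :=
  if h : (y : ℕ) < s then ⟨(y : ℕ), by omega⟩
  else ⟨(y : ℕ) - 2, by have := y.isLt; omega⟩

variable {m s : ℕ}

@[simp] lemma enc_val (x : Fin m) :
    ((enc m s x : Fin (m+2)) : ℕ) = if (x : ℕ) < s then (x : ℕ) else (x : ℕ) + 2 := rfl

@[simp] lemma dec_val (hs : s + 1 ≤ m) (y : Fin (m+2)) :
    ((dec m s hs y : Fin m) : ℕ) = if (y : ℕ) < s then (y : ℕ) else (y : ℕ) - 2 := by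
  unfold dec; split <;> simp_all

lemma enc_lt_enc {x y : Fin m} : enc m s x < enc m s y ↔ x < y := by
  simp only [Fin.lt_def, enc_val]; split_ifs <;> omega

lemma enc_inj {x y : Fin m} (h : enc m s x = enc m s y) : x = y := by
  have := congrArg Fin.val h
  simp only [enc_val] at this
  apply Fin.ext; split_ifs at this <;> omega

lemma enc_ne_s (x : Fin m) : ((enc m s x : Fin (m+2)) : ℕ) ≠ s := by
  simp only [enc_val]; split <;> omega

lemma enc_ne_s1 (x : Fin m) : ((enc m s x : Fin (m+2)) : ℕ) ≠ s + 1 := by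
  have := x.isLt; simp only [enc_val]; split <;> omega

lemma dec_enc (hs : s + 1 ≤ m) (x : Fin m) : dec m s hs (enc m s x) = x := by
  apply Fin.ext; simp only [dec_val, enc_val]; split_ifs <;> omega

lemma enc_dec (hs : s + 1 ≤ m) {y : Fin (m+2)} (h1 : (y : ℕ) ≠ s) (h2 : (y : ℕ) ≠ s + 1) :
    enc m s (dec m s hs y) = y := by
  apply Fin.ext; have := y.isLt
  simp only [dec_val, enc_val]; split_ifs <;> omega

lemma dec_lt_dec (hs : s + 1 ≤ m) {a b : Fin (m+2)}
    (ha1 : (a : ℕ) ≠ s) (ha2 : (a : ℕ) ≠ s + 1) (hb1 : (b : ℕ) ≠ s) (hb2 : (b : ℕ) ≠ s + 1) :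
    dec m s hs a < dec m s hs b ↔ a < b := by
  simp only [Fin.lt_def, dec_val]; split_ifs <;> omega

/-- Insertion of the adjacent arc `(s, s+1)` into a diagram `g`. -/
def G (m s : ℕ) (hs : s + 1 ≤ m) (g : Equiv.Perm (Fin m)) (y : Fin (m + 2)) : Fin (m + 2) :=
  if (y : ℕ) = s then ⟨s + 1, by omega⟩
  else if (y : ℕ) = s + 1 then ⟨s, by omega⟩
  else enc m s (g (dec m s hs y))

lemma G_s (hs : s + 1 ≤ m) (g : Equiv.Perm (Fin m)) (h : s < m + 2) :
    G m s hs g ⟨s, h⟩ = ⟨s + 1, by omega⟩ := by simp [G]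

lemma G_s1 (hs : s + 1 ≤ m) (g : Equiv.Perm (Fin m)) (h : s + 1 < m + 2) :
    G m s hs g ⟨s + 1, h⟩ = ⟨s, by omega⟩ := by simp [G]

lemma G_generic (hs : s + 1 ≤ m) (g : Equiv.Perm (Fin m)) {y : Fin (m+2)}
    (h1 : (y : ℕ) ≠ s) (h2 : (y : ℕ) ≠ s + 1) :
    G m s hs g y = enc m s (g (dec m s hs y)) := by simp [G, h1, h2]

lemma G_enc (hs : s + 1 ≤ m) (g : Equiv.Perm (Fin m)) (x : Fin m) :
    G m s hs g (enc m s x) = enc m s (g x) := by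
  rw [G_generic hs g (enc_ne_s x) (enc_ne_s1 x), dec_enc]

lemma G_invol (hs : s + 1 ≤ m) (g : Equiv.Perm (Fin m)) (hg : ∀ x, g (g x) = x) :
    Function.Involutive (G m s hs g) := by
  intro y
  by_cases h1 : (y : ℕ) = s
  · have hy : y = ⟨s, by omega⟩ := Fin.ext h1
    rw [hy, G_s, G_s1]
  · by_cases h2 : (y : ℕ) = s + 1
    · have hy : y = ⟨s + 1, by omega⟩ := Fin.ext h2
      rw [hy, G_s1, G_s]
    · rw [G_generic hs g h1 h2, G_enc, hg, enc_dec hs h1 h2]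

/-- Insertion preserves the diagram conditions. -/
lemma G_P (hs : s + 1 ≤ m) (g : Equiv.Perm (Fin m)) (hg : P m s g) :
    P (m + 2) (s + 1) (Function.Involutive.toPerm (G m s hs g) (G_invol hs g hg.1)) := by
  obtain ⟨ginv, gne, gnc, gbot⟩ := hg
  refine ⟨?_, ?_, ?_, ?_⟩
  · intro i
    simp only [Function.Involutive.coe_toPerm]
    exact G_invol hs g ginv i
  · intro i
    simp only [Function.Involutive.coe_toPerm]
    by_cases h1 : (i : ℕ) = s
    · have hi : i = ⟨s, by omega⟩ := Fin.ext h1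
      rw [hi, G_s]
      intro h; have := congrArg Fin.val h; simp at this
    · by_cases h2 : (i : ℕ) = s + 1
      · have hi : i = ⟨s + 1, by omega⟩ := Fin.ext h2
        rw [hi, G_s1]
        intro h; have := congrArg Fin.val h; simp at this
      · rw [G_generic hs g h1 h2]
        intro h
        have := congrArg (dec m s hs) h
        rw [dec_enc] at this
        exact gne _ this
  · intro i j hij hjf
    simp only [Function.Involutive.coe_toPerm] at *
    by_cases hi1 : (i : ℕ) = s
    · have hi : i = ⟨s, by omega⟩ := Fin.ext hi1
      rw [hi, G_s] at hjf
      rw [hi] at hij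
      simp only [Fin.lt_def] at hij hjf
      omega
    · by_cases hi2 : (i : ℕ) = s + 1
      · have hi : i = ⟨s + 1, by omega⟩ := Fin.ext hi2
        rw [hi, G_s1] at hjf
        rw [hi] at hij
        simp only [Fin.lt_def] at hij hjf
        omega
      · rw [G_generic hs g hi1 hi2] at hjf ⊢
        by_cases hj1 : (j : ℕ) = s
        · have hj : j = ⟨s, by omega⟩ := Fin.ext hj1
          rw [hj, G_s]
          rw [hj] at hij; rw [hj] at hjf
          have h1 := enc_ne_s1 (s := s) (g (dec m s hs i))
          simp only [Fin.lt_def] at hij hjf ⊢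
          omega
        · by_cases hj2 : (j : ℕ) = s + 1
          · have hj : j = ⟨s + 1, by omega⟩ := Fin.ext hj2
            rw [hj, G_s1]
            rw [hj] at hij; rw [hj] at hjf
            simp only [Fin.lt_def] at hij hjf ⊢
            omega
          · rw [G_generic hs g hj1 hj2]
            have hd : dec m s hs i < dec m s hs j := by
              rw [dec_lt_dec hs hi1 hi2 hj1 hj2]; exact hij
            have he : dec m s hs j < g (dec m s hs i) := by
              rw [← enc_lt_enc (s := s), enc_dec hs hj1 hj2]; exact hjf
            obtain ⟨h1, h2⟩ := gnc _ _ hd he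
            constructor
            · rw [← enc_dec hs hi1 hi2, enc_lt_enc]; exact h1
            · rw [enc_lt_enc]; exact h2
  · intro i hi
    simp only [Function.Involutive.coe_toPerm]
    by_cases h1 : (i : ℕ) = s
    · have hieq : i = ⟨s, by omega⟩ := Fin.ext h1
      rw [hieq, G_s]
    · have h2 : (i : ℕ) ≠ s + 1 := by omega
      rw [G_generic hs g h1 h2]
      have hlt : ((dec m s hs i : Fin m) : ℕ) < s := by
        simp only [dec_val]; split_ifs <;> omega
      have := gbot _ hlt
      simp only [enc_val]
      split <;> omega

lemma pair_lemma (hs : s + 1 ≤ m) (ht : s + 1 < m + 2) (f : Equiv.Perm (Fin (m+2)))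
    (hf : P (m+2) (s+1) f) (hlow : ((f ⟨s+1, ht⟩ : Fin (m+2)) : ℕ) < s + 1) :
    f ⟨s+1, ht⟩ = ⟨s, by omega⟩ ∧ f ⟨s, by omega⟩ = ⟨s+1, ht⟩ := by
  obtain ⟨finv, fne, fnc, fbot⟩ := hf
  have hm0 : s < m + 2 := by omega
  have key : ((f ⟨s+1, ht⟩ : Fin (m+2)) : ℕ) = s := by
    by_contra hne'
    have hjv : ((f ⟨s+1, ht⟩ : Fin (m+2)) : ℕ) < s := by omega
    have hfj : f (f ⟨s+1, ht⟩) = ⟨s+1, ht⟩ := finv _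
    have h2 := fnc (f ⟨s+1, ht⟩) ⟨s, hm0⟩
      (by rw [Fin.lt_def]; exact hjv)
      (by rw [hfj, Fin.lt_def]; exact Nat.lt_succ_self s)
    have h3 := fbot ⟨s, hm0⟩ (Nat.lt_succ_self s)
    rw [hfj] at h2
    have h4 := h2.2
    rw [Fin.lt_def] at h4
    have e1 : ((⟨s+1, ht⟩ : Fin (m+2)) : ℕ) = s + 1 := rfl
    omega
  have h1 : f ⟨s+1, ht⟩ = ⟨s, hm0⟩ := Fin.ext key
  refine ⟨h1, ?_⟩
  have h5 := finv ⟨s+1, ht⟩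
  rw [h1] at h5
  exact h5

lemma f_enc_ne (hs : s + 1 ≤ m) (ht : s + 1 < m + 2) (f : Equiv.Perm (Fin (m+2)))
    (hf : P (m+2) (s+1) f) (hlow : ((f ⟨s+1, ht⟩ : Fin (m+2)) : ℕ) < s + 1) (x : Fin m) :
    ((f (enc m s x) : Fin (m+2)) : ℕ) ≠ s ∧ ((f (enc m s x) : Fin (m+2)) : ℕ) ≠ s + 1 := by
  have hm0 : s < m + 2 := by omega
  obtain ⟨hp1, hp2⟩ := pair_lemma hs ht f hf hlow
  have hp1' : f ⟨s+1, ht⟩ = ⟨s, hm0⟩ := hp1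
  have hp2' : f ⟨s, hm0⟩ = ⟨s+1, ht⟩ := hp2
  constructor
  · intro h
    have h' : f (enc m s x) = ⟨s, hm0⟩ := Fin.ext h
    have h2 : enc m s x = ⟨s+1, ht⟩ := by
      have h3 := congrArg f h'
      rwa [hf.1, hp2'] at h3
    have h4 : ((enc m s x : Fin (m+2)) : ℕ) = s + 1 := congrArg Fin.val h2
    exact enc_ne_s1 x h4
  · intro h
    have h' : f (enc m s x) = ⟨s+1, ht⟩ := Fin.ext h
    have h2 : enc m s x = ⟨s, hm0⟩ := by
      have h3 := congrArg f h'
      rwa [hf.1, hp1'] at h3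
    have h4 : ((enc m s x : Fin (m+2)) : ℕ) = s := congrArg Fin.val h2
    exact enc_ne_s x h4

lemma F_invol (hs : s + 1 ≤ m) (ht : s + 1 < m + 2) (f : Equiv.Perm (Fin (m+2)))
    (hf : P (m+2) (s+1) f) (hlow : ((f ⟨s+1, ht⟩ : Fin (m+2)) : ℕ) < s + 1) :
    Function.Involutive (fun x => dec m s hs (f (enc m s x))) := by
  intro x
  simp only
  rw [enc_dec hs (f_enc_ne hs ht f hf hlow x).1 (f_enc_ne hs ht f hf hlow x).2, hf.1, dec_enc]

/-- Deletion of the adjacent arc `(s, s+1)` preserves the diagram conditions. -/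
lemma F_P (hs : s + 1 ≤ m) (ht : s + 1 < m + 2) (f : Equiv.Perm (Fin (m+2)))
    (hf : P (m+2) (s+1) f) (hlow : ((f ⟨s+1, ht⟩ : Fin (m+2)) : ℕ) < s + 1) :
    P m s (Function.Involutive.toPerm _ (F_invol hs ht f hf hlow)) := by
  have hgen := f_enc_ne hs ht f hf hlow
  obtain ⟨finv, fne, fnc, fbot⟩ := hf
  refine ⟨?_, ?_, ?_, ?_⟩
  · intro x
    simp only [Function.Involutive.coe_toPerm]
    exact F_invol hs ht f ⟨finv, fne, fnc, fbot⟩ hlow x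
  · intro x h
    simp only [Function.Involutive.coe_toPerm] at h
    have h2 := congrArg (enc m s) h
    rw [enc_dec hs (hgen x).1 (hgen x).2] at h2
    exact fne _ h2
  · intro x y hxy hyf
    simp only [Function.Involutive.coe_toPerm] at *
    have hab : enc m s x < enc m s y := enc_lt_enc.2 hxy
    have hbf : enc m s y < f (enc m s x) := by
      rw [← dec_lt_dec hs (enc_ne_s y) (enc_ne_s1 y) (hgen x).1 (hgen x).2, dec_enc]
      exact hyf
    obtain ⟨h1, h2⟩ := fnc _ _ hab hbf
    constructor
    · rw [← dec_lt_dec hs (enc_ne_s x) (enc_ne_s1 x) (hgen y).1 (hgen y).2, dec_enc] at h1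
      exact h1
    · rw [← dec_lt_dec hs (hgen y).1 (hgen y).2 (hgen x).1 (hgen x).2] at h2
      exact h2
  · intro x hx
    simp only [Function.Involutive.coe_toPerm]
    have hxv : ((enc m s x : Fin (m+2)) : ℕ) = (x : ℕ) := by
      simp only [enc_val]; split <;> omega
    have h1 := fbot (enc m s x) (by omega)
    have h2 := (hgen x).2
    simp only [dec_val]
    split <;> omega

lemma G_of_F (hs : s + 1 ≤ m) (ht : s + 1 < m + 2) (f : Equiv.Perm (Fin (m+2)))
    (hf : P (m+2) (s+1) f) (hlow : ((f ⟨s+1, ht⟩ : Fin (m+2)) : ℕ) < s + 1) :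
    G m s hs (Function.Involutive.toPerm _ (F_invol hs ht f hf hlow)) = ⇑f := by
  have hm0 : s < m + 2 := by omega
  obtain ⟨hp1, hp2⟩ := pair_lemma hs ht f hf hlow
  have hp1' : f ⟨s+1, ht⟩ = ⟨s, hm0⟩ := hp1
  have hp2' : f ⟨s, hm0⟩ = ⟨s+1, ht⟩ := hp2
  funext y
  by_cases h1 : (y : ℕ) = s
  · have hy : y = ⟨s, hm0⟩ := Fin.ext h1
    rw [hy, G_s, hp2']
  · by_cases h2 : (y : ℕ) = s + 1
    · have hy : y = ⟨s+1, ht⟩ := Fin.ext h2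
      rw [hy, G_s1, hp1']
    · rw [G_generic hs _ h1 h2]
      simp only [Function.Involutive.coe_toPerm]
      rw [enc_dec hs h1 h2]
      have hfy1 : ((f y : Fin (m+2)) : ℕ) ≠ s := by
        intro h
        have h' : f y = ⟨s, hm0⟩ := Fin.ext h
        have h3 := congrArg f h'
        rw [hf.1, hp2'] at h3
        exact h2 (congrArg Fin.val h3)
      have hfy2 : ((f y : Fin (m+2)) : ℕ) ≠ s + 1 := by
        intro h
        have h' : f y = ⟨s+1, ht⟩ := Fin.ext h
        have h3 := congrArg f h'
        rw [hf.1, hp1'] at h3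
        exact h1 (congrArg Fin.val h3)
      exact enc_dec hs hfy1 hfy2

/-- The bijection given by deleting / inserting the adjacent arc `(s, s+1)`. -/
lemma del_card (m s : ℕ) (hs : s + 1 ≤ m) (ht : s + 1 < m + 2) :
    ((D (m+2) (s+1)).filter
        (fun f => ((f ⟨s+1, ht⟩ : Fin (m+2)) : ℕ) < s + 1)).card = (D m s).card := by
  refine (Finset.card_bij
    (fun g hg => Function.Involutive.toPerm (G m s hs g) (G_invol hs g (mem_D.1 hg).1))
    ?_ ?_ ?_).symm
  · intro g hg
    rw [Finset.mem_filter]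
    refine ⟨mem_D.2 (G_P hs g (mem_D.1 hg)), ?_⟩
    simp only [Function.Involutive.coe_toPerm]
    rw [show (⟨s+1, ht⟩ : Fin (m+2)) = ⟨s+1, by omega⟩ from rfl, G_s1]
    exact Nat.lt_succ_self s
  · intro g₁ hg₁ g₂ hg₂ h
    apply Equiv.ext
    intro x
    have h2 := congrArg (fun (e : Equiv.Perm (Fin (m+2))) => e (enc m s x)) h
    simp only [Function.Involutive.coe_toPerm, G_enc] at h2
    exact enc_inj h2
  · intro f hf
    rw [Finset.mem_filter] at hf
    obtain ⟨hfD, hlow⟩ := hf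
    have hfP := mem_D.1 hfD
    refine ⟨Function.Involutive.toPerm _ (F_invol hs ht f hfP hlow),
      mem_D.2 (F_P hs ht f hfP hlow), ?_⟩
    apply Equiv.ext
    intro y
    simp only [Function.Involutive.coe_toPerm]
    rw [G_of_F hs ht f hfP hlow]

/-- Splitting off the diagrams where the first top point is matched below. -/
lemma D_split (n t : ℕ) (ht : t < n) :
    (D n t).card =
      ((D n t).filter (fun f => ((f ⟨t, ht⟩ : Fin n) : ℕ) < t)).card + (D n (t+1)).card := by
  have hset : (D n t).filter (fun f => ¬ ((f ⟨t, ht⟩ : Fin n) : ℕ) < t) = D n (t+1) := by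
    ext f
    simp only [Finset.mem_filter, not_lt, mem_D]
    constructor
    · rintro ⟨⟨finv, fne, fnc, fbot⟩, hge⟩
      refine ⟨finv, fne, fnc, ?_⟩
      intro i hi
      by_cases h : (i : ℕ) = t
      · have hieq : i = ⟨t, ht⟩ := Fin.ext h
        rw [hieq]
        have hne : ((f ⟨t, ht⟩ : Fin n) : ℕ) ≠ t := by
          intro hval
          exact fne ⟨t, ht⟩ (Fin.ext hval)
        omega
      · have hilt : (i : ℕ) < t := by omega
        have h1 := fbot i hilt
        have h2 : ((f i : Fin n) : ℕ) ≠ t := by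
          intro hval
          have h3 : f i = ⟨t, ht⟩ := Fin.ext hval
          have h4 := congrArg f h3
          rw [finv] at h4
          have h5 := congrArg Fin.val h4
          omega
        omega
    · rintro ⟨finv, fne, fnc, fbot⟩
      refine ⟨⟨finv, fne, fnc, ?_⟩, ?_⟩
      · intro i hi
        have := fbot i (by omega)
        omega
      · have := fbot ⟨t, ht⟩ (Nat.lt_succ_self t)
        omega
  rw [← Finset.card_filter_add_card_filter_not
    (p := fun f : Equiv.Perm (Fin n) => ((f ⟨t, ht⟩ : Fin n) : ℕ) < t) (s := D n t), hset]

end TLAux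

lemma TLAux.del_card' (n m s : ℕ) (h : n = m + 2) (hs : s + 1 ≤ m) (ht : s + 1 < n) :
    ((TLAux.D n (s+1)).filter
        (fun f => ((f ⟨s+1, ht⟩ : Fin n) : ℕ) < s + 1)).card = (TLAux.D m s).card := by
  subst h
  exact TLAux.del_card m s hs ht

theorem stmt_3 (t k : ℕ) :
    wCount t (k + 1) = wCount ((t : ℤ) - 1) (k + 1) + wCount ((t : ℤ) + 1) k := by
  have hL : wCount (t : ℤ) (k + 1) = (TLAux.D (2*t+2*(k+1)) t).card := by
    rw [wCount, dif_pos (Int.natCast_nonneg t), Int.toNat_natCast, TLAux.monic_eq]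
  have hR2 : wCount ((t : ℤ) + 1) k = (TLAux.D (2*(t+1)+2*k) (t+1)).card := by
    have h1 : ((t : ℤ) + 1) = ((t + 1 : ℕ) : ℤ) := by push_cast; ring
    rw [h1, wCount, dif_pos (Int.natCast_nonneg _), Int.toNat_natCast, TLAux.monic_eq]
  have hn : t < 2*t+2*(k+1) := by omega
  have hsplit := TLAux.D_split (2*t+2*(k+1)) t hn
  have hcast : (TLAux.D (2*t+2*(k+1)) (t+1)).card = (TLAux.D (2*(t+1)+2*k) (t+1)).card :=
    TLAux.D_cast (by ring) _
  rw [hL, hR2, hsplit, hcast]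
  cases t with
  | zero =>
    have hfilt : ((TLAux.D (2*0+2*(k+1)) 0).filter
        (fun f => ((f ⟨0, hn⟩ : Fin (2*0+2*(k+1))) : ℕ) < 0)) = ∅ := by
      apply Finset.filter_false_of_mem
      intro f _
      omega
    have hneg : wCount (((0:ℕ) : ℤ) - 1) (k + 1) = 0 := by
      rw [wCount, dif_neg (by norm_num)]
    rw [hfilt, hneg]
    simp
  | succ s =>
    have hdel := TLAux.del_card' (2*(s+1)+2*(k+1)) (2*s+2*(k+1)) s (by ring) (by omega) hn
    rw [hdel]
    have hR1 : wCount (((s+1:ℕ) : ℤ) - 1) (k + 1) = (TLAux.D (2*s+2*(k+1)) s).card := by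
      have h1 : ((s+1:ℕ) : ℤ) - 1 = ((s : ℕ) : ℤ) := by push_cast; ring
      rw [h1, wCount, dif_pos (Int.natCast_nonneg _), Int.toNat_natCast, TLAux.monic_eq]
    rw [hR1]
end

section
/- Define polynomials p_i(x) ∈ ℤ[x] by p_1 = p_2 = 1 and p_{i+1}(x) = p_i(x) − x·p_{i−1}(x) for i ≥ 2. Then for each j ≥ 1 there exist unique integers c_i^j (0 ≤ i ≤ ⌊(j−1)/2⌋) with 1 + y + y² + … + y^{j−1} = Σ_i c_i^j · y^i (y+1)^{j−1−2i}, and Σ_i c_i^j x^i = p_j(x). -/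
open Polynomial

/-- The polynomials `p_1 = p_2 = 1`, `p_{i+1} = p_i − x·p_{i−1}` (we also set
`p_0 = 1`, which is irrelevant). -/
noncomputable def pPoly : ℕ → Polynomial ℤ
  | 0 => 1
  | 1 => 1
  | 2 => 1
  | (n + 3) => pPoly (n + 2) - Polynomial.X * pPoly (n + 1)

lemma pPoly_deg : ∀ j, (pPoly j).natDegree ≤ (j - 1) / 2
  | 0 => by simp [pPoly]
  | 1 => by simp [pPoly]
  | 2 => by simp [pPoly]
  | (n + 3) => by
    have h1 := pPoly_deg (n + 2)
    have h2 := pPoly_deg (n + 1)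
    rw [pPoly]
    refine le_trans (natDegree_sub_le _ _) ?_
    have h3 : (X * pPoly (n+1)).natDegree ≤ 1 + (pPoly (n+1)).natDegree :=
      le_trans (natDegree_mul_le) (by simp)
    simp only [max_le_iff]
    omega

lemma sum_fin_eq (p : Polynomial ℤ) (m : ℕ) (h : p.natDegree ≤ m) :
    ∑ i : Fin (m + 1), C (p.coeff i) * X ^ (i : ℕ) = p := by
  conv_rhs => rw [p.as_sum_range' (m + 1) (Nat.lt_succ_of_le h)]
  rw [Fin.sum_univ_eq_sum_range (fun i => C (p.coeff i) * X ^ i)]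
  simp only [C_mul_X_pow_eq_monomial]

lemma monic_Xone : Monic (X + 1 : Polynomial ℤ) := by
  simpa using monic_X_add_C (1 : ℤ)

lemma q_monic (i e : ℕ) : Monic ((X : Polynomial ℤ) ^ i * (X + 1) ^ e) :=
  (monic_X_pow i).mul (monic_Xone.pow e)

lemma q_deg (i e : ℕ) : ((X : Polynomial ℤ) ^ i * (X + 1) ^ e).natDegree = i + e := by
  rw [((monic_X_pow i)).natDegree_mul (monic_Xone.pow e), natDegree_X_pow,
    monic_Xone.natDegree_pow]
  have : (X + 1 : Polynomial ℤ).natDegree = 1 := by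
    simpa using natDegree_X_add_C (1 : ℤ)
  rw [this]; ring

lemma indep (n m : ℕ) (hm : 2 * m ≤ n) (d : Fin (m + 1) → ℤ)
    (h : ∑ i : Fin (m + 1), C (d i) * X ^ (i : ℕ) * (X + 1) ^ (n - 2 * (i : ℕ)) = 0) :
    ∀ i, d i = 0 := by
  suffices H : ∀ k, ∀ hk : k < m + 1, d ⟨k, hk⟩ = 0 by
    intro i; have := H i i.isLt; simpa using this
  intro k
  induction k using Nat.strong_induction_on with
  | _ k ih =>
    intro hk
    have hc := congrArg (fun p => Polynomial.coeff p (n - k)) h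
    simp only [finset_sum_coeff, coeff_zero, mul_assoc, coeff_C_mul] at hc
    rw [Finset.sum_eq_single (⟨k, hk⟩ : Fin (m + 1))] at hc
    · rw [show n - 2 * ((⟨k, hk⟩ : Fin (m+1)) : ℕ) = n - 2 * k from rfl] at hc
      have hdeg : ((X : Polynomial ℤ) ^ k * (X + 1) ^ (n - 2 * k)).natDegree = n - k := by
        rw [q_deg]; omega
      rw [← hdeg, ← leadingCoeff, (q_monic k (n - 2*k)).leadingCoeff] at hc
      simpa using hc
    · intro b _ hb
      rcases lt_or_gt_of_ne (fun hbk : (b : ℕ) = k => hb (Fin.ext hbk)) with hlt | hgt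
      · have : d b = 0 := by
          have := ih b hlt b.isLt
          simpa using this
        simp [this]
      · have : ((X : Polynomial ℤ) ^ (b:ℕ) * (X + 1) ^ (n - 2 * (b:ℕ))).natDegree < n - k := by
          rw [q_deg]; have := b.isLt; omega
        rw [coeff_eq_zero_of_natDegree_lt this, mul_zero]
    · simp

noncomputable abbrev Kf := FractionRing (Polynomial ℤ)
noncomputable abbrev φf : Polynomial ℤ →+* Kf := algebraMap (Polynomial ℤ) Kf

lemma hb_ne : φf X + 1 ≠ 0 := by
  have h1 : (X + 1 : Polynomial ℤ) ≠ 0 := monic_Xone.ne_zero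
  have := (IsFractionRing.injective (Polynomial ℤ) Kf).ne h1
  simpa [map_add] using this

lemma geom_rec (n : ℕ) :
    ∑ i ∈ Finset.range (n + 3), (X : Polynomial ℤ) ^ i
      = (X + 1) * ∑ i ∈ Finset.range (n + 2), X ^ i - X * ∑ i ∈ Finset.range (n + 1), X ^ i := by
  rw [Finset.sum_range_succ (n := n + 2), Finset.sum_range_succ (n := n + 1)]
  ring

lemma main_id : ∀ n : ℕ,
    (Polynomial.aeval (φf X / (φf X + 1) ^ 2) (pPoly (n + 1))) * (φf X + 1) ^ n
      = φf (∑ i ∈ Finset.range (n + 1), X ^ i)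
  | 0 => by simp [pPoly]
  | 1 => by
    simp [pPoly, Finset.sum_range_succ, map_add, map_one]
    ring
  | (n + 2) => by
    have h1 := main_id (n + 1)
    have h2 := main_id n
    set t := φf X / (φf X + 1) ^ 2 with ht
    have hb := hb_ne
    have htb : t * (φf X + 1) ^ 2 = φf X := div_mul_cancel₀ _ (pow_ne_zero 2 hb)
    rw [show n + 2 + 1 = n + 3 from rfl, pPoly, geom_rec]
    simp only [map_sub, map_mul, map_add, map_one, aeval_X]
    calc (aeval t (pPoly (n + 2)) - t * aeval t (pPoly (n + 1))) * (φf X + 1) ^ (n + 2)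
        = (aeval t (pPoly (n + 2)) * (φf X + 1) ^ (n + 1)) * (φf X + 1)
          - (t * (φf X + 1) ^ 2) * (aeval t (pPoly (n + 1)) * (φf X + 1) ^ n) := by ring
      _ = _ := by rw [h1, h2, htb]; ring

lemma exist_id (n : ℕ) :
    ∑ i : Fin (n / 2 + 1), C ((pPoly (n + 1)).coeff i) * X ^ (i : ℕ) * (X + 1) ^ (n - 2 * (i : ℕ))
      = ∑ i ∈ Finset.range (n + 1), (X : Polynomial ℤ) ^ i := by
  apply IsFractionRing.injective (Polynomial ℤ) Kf
  have hdeg : (pPoly (n + 1)).natDegree ≤ n / 2 := by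
    simpa using pPoly_deg (n + 1)
  have hrepr := sum_fin_eq (pPoly (n + 1)) (n / 2) hdeg
  set t := φf X / (φf X + 1) ^ 2 with ht
  have hb := hb_ne
  rw [show (algebraMap (Polynomial ℤ) Kf) = φf from rfl]
  rw [← main_id n]
  conv_rhs => rw [← hrepr]
  rw [← ht]
  simp only [map_sum, map_mul, map_pow, map_add, map_one, Finset.sum_mul, aeval_C,
    aeval_X_pow, aeval_X]
  refine Finset.sum_congr rfl fun i _ => ?_
  have h2i : 2 * (i : ℕ) ≤ n := by have := i.isLt; omega
  have hC : φf (C ((pPoly (n+1)).coeff i)) = algebraMap ℤ Kf ((pPoly (n+1)).coeff i) := by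
    simp [eq_intCast, map_intCast]
  have hti : t ^ (i : ℕ) * (φf X + 1) ^ (2 * (i : ℕ)) = φf X ^ (i : ℕ) := by
    rw [ht, div_pow, ← pow_mul]
    exact div_mul_cancel₀ _ (pow_ne_zero _ hb)
  have hsplit : (φf X + 1) ^ n = (φf X + 1) ^ (2 * (i:ℕ)) * (φf X + 1) ^ (n - 2 * (i:ℕ)) := by
    rw [← pow_add]; congr 1; omega
  rw [hC, hsplit, ← hti]
  ring

theorem stmt_7 (j : ℕ) (hj : 1 ≤ j) :
    (∃! c : Fin ((j - 1) / 2 + 1) → ℤ,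
        ∑ i : Fin ((j - 1) / 2 + 1),
            Polynomial.C (c i) * Polynomial.X ^ (i : ℕ) *
              (Polynomial.X + 1) ^ (j - 1 - 2 * (i : ℕ)) =
          ∑ i ∈ Finset.range j, (Polynomial.X : Polynomial ℤ) ^ i) ∧
    (∀ c : Fin ((j - 1) / 2 + 1) → ℤ,
        (∑ i : Fin ((j - 1) / 2 + 1),
            Polynomial.C (c i) * Polynomial.X ^ (i : ℕ) *
              (Polynomial.X + 1) ^ (j - 1 - 2 * (i : ℕ)) =
          ∑ i ∈ Finset.range j, (Polynomial.X : Polynomial ℤ) ^ i) →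
        ∑ i : Fin ((j - 1) / 2 + 1), Polynomial.C (c i) * Polynomial.X ^ (i : ℕ) = pPoly j) := by
  obtain ⟨n, rfl⟩ : ∃ n, j = n + 1 := ⟨j - 1, (Nat.succ_pred_eq_of_pos hj).symm⟩
  set c₀ : Fin (n / 2 + 1) → ℤ := fun i => (pPoly (n + 1)).coeff i with hc₀
  have hdeg : (pPoly (n + 1)).natDegree ≤ n / 2 := by simpa using pPoly_deg (n + 1)
  have hrepr : ∑ i : Fin (n / 2 + 1), C (c₀ i) * X ^ (i : ℕ) = pPoly (n + 1) :=
    sum_fin_eq (pPoly (n + 1)) (n / 2) hdeg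
  have hex := exist_id n
  have huniq : ∀ c : Fin (n / 2 + 1) → ℤ,
      (∑ i : Fin (n / 2 + 1), C (c i) * X ^ (i : ℕ) * (X + 1) ^ (n - 2 * (i : ℕ)) =
        ∑ i ∈ Finset.range (n + 1), (X : Polynomial ℤ) ^ i) → c = c₀ := by
    intro c hcid
    have hzero : ∑ i : Fin (n / 2 + 1),
        C ((c - c₀) i) * X ^ (i : ℕ) * (X + 1) ^ (n - 2 * (i : ℕ)) = 0 := by
      simp only [Pi.sub_apply, map_sub, sub_mul]
      rw [Finset.sum_sub_distrib, hcid, hex, sub_self]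
    have h2m : 2 * (n / 2) ≤ n := by omega
    have hz := indep n (n / 2) h2m (c - c₀) hzero
    funext i
    have := hz i
    simpa [sub_eq_zero] using this
  constructor
  · exact ⟨c₀, hex, fun c hcid => huniq c hcid⟩
  · intro c hcid
    have hc : c = c₀ := huniq c hcid
    subst hc
    exact hrepr
end

section
/- Let p_i(x) ∈ ℤ[x] be defined by p_1 = p_2 = 1 and p_{i+1} = p_i − x·p_{i−1}. Then the polynomials y^i(y+1)^{j−1−2i} for 0 ≤ i ≤ ⌊(j−1)/2⌋ form a basis of the space of palindromic polynomials of degree j−1 in y, and the integers c_i^j defined by expanding 1+y+…+y^{j−1} in this basis satisfy the recurrence c_i^{j+1} = c_i^j − c_{i−1}^{j−1}. -/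
open Polynomial

/-- The basis family `y^i (y+1)^{j−1−2i}`, `0 ≤ i ≤ ⌊(j−1)/2⌋`. -/
noncomputable def basisFam (j : ℕ) (i : Fin ((j - 1) / 2 + 1)) : Polynomial ℤ :=
  Polynomial.X ^ (i : ℕ) * (Polynomial.X + 1) ^ (j - 1 - 2 * (i : ℕ))

/-- `c : ℕ → ℤ` gives the expansion of `1 + y + ⋯ + y^{j−1}` in the family
`y^i(y+1)^{j−1−2i}`, with `c i = 0` outside the index range. -/
def expandsAs (j : ℕ) (c : ℕ → ℤ) : Prop :=
  (∀ i : ℕ, (j - 1) / 2 < i → c i = 0) ∧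
  (∑ i ∈ Finset.range ((j - 1) / 2 + 1),
      Polynomial.C (c i) * Polynomial.X ^ i * (Polynomial.X + 1) ^ (j - 1 - 2 * i) =
    ∑ i ∈ Finset.range j, (Polynomial.X : Polynomial ℤ) ^ i)

/-!
Each `y^i (y+1)^(n-2i)` vanishes to order exactly `i` at `0` with lowest coefficient `1`,
which gives linear independence. If `P` is palindromic of degree `≤ n`, so is
`Q = P - P(0) (y+1)^n`, and `Q(0) = 0` forces `Q = y R` with `R` palindromic of degree
`≤ n - 2`; since `y · y^i (y+1)^(n-2-2i) = y^(i+1) (y+1)^(n-2(i+1))`, induction on `n` gives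
the spanning property.
For the recurrence write `S_m = 1 + y + ⋯ + y^(m-1)`, so that `(y+1) S_(n+1) - y S_n = S_(n+2)`:
multiplying the expansion of `S_(n+1)` by `y + 1` and that of `S_n` by `y` yields an expansion of
`S_(n+2)` with coefficients `c'_i - c_(i-1)`, which is the expansion by uniqueness.
-/

open Finset Submodule

section Ring

variable {R : Type*} [Ring R]

theorem linearIndependent_X_pow_mul {q : ℕ → R[X]} (hq : ∀ i, (q i).coeff 0 = 1) :
    LinearIndependent R fun i => X ^ i * q i := by
  rw [linearIndependent_iff']
  intro s g hg i
  induction i using Nat.strong_induction_on with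
  | _ i ih =>
    intro hi
    have hcoeff := congrArg (coeff · i) hg
    simp only [finsetSum_coeff, coeff_smul, coeff_X_pow_mul', smul_eq_mul, coeff_zero] at hcoeff
    rwa [Finset.sum_eq_single i (fun k hk hki => ?_) (absurd hi), if_pos le_rfl, Nat.sub_self,
      hq, mul_one] at hcoeff
    rcases hki.lt_or_gt with hlt | hgt
    · rw [ih k hlt hk, zero_mul]
    · rw [if_neg (not_le.mpr hgt), mul_zero]

theorem linearIndependent_X_pow_mul_X_add_one_pow (f : ℕ → ℕ) :
    LinearIndependent R fun i => X ^ i * (X + 1 : R[X]) ^ f i :=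
  linearIndependent_X_pow_mul fun _ => by simp [coeff_X_add_one_pow]

def IsPalindromic (n : ℕ) (P : R[X]) : Prop :=
  P.natDegree ≤ n ∧ ∀ m ≤ n, P.coeff m = P.coeff (n - m)

theorem IsPalindromic.sub_C_mul_X_add_one_pow {n : ℕ} {P : R[X]} (hP : IsPalindromic n P)
    (a : R) : IsPalindromic n (P - C a * (X + 1) ^ n) := by
  refine ⟨(natDegree_sub_le _ _).trans (max_le hP.1 (by compute_degree)), fun m hm => ?_⟩
  simp only [coeff_sub, coeff_C_mul, coeff_X_add_one_pow, hP.2 m hm, Nat.choose_symm hm]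

theorem IsPalindromic.eq_zero {n : ℕ} {P : R[X]} (hP : IsPalindromic n P) (h0 : P.coeff 0 = 0)
    (hn : n ≤ 1) : P = 0 := by
  ext m
  rw [coeff_zero]
  obtain rfl | hm0 := Nat.eq_zero_or_pos m
  · exact h0
  rcases le_or_gt m n with hm | hm
  · rwa [hP.2 m hm, show n - m = 0 by omega]
  · exact coeff_eq_zero_of_natDegree_lt (hP.1.trans_lt hm)

theorem IsPalindromic.divX {n : ℕ} {P : R[X]} (hP : IsPalindromic (n + 2) P)
    (h0 : P.coeff 0 = 0) : IsPalindromic n P.divX := by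
  refine ⟨natDegree_le_iff_coeff_eq_zero.mpr fun m hm => ?_, fun m hm => ?_⟩
  · rw [coeff_divX]
    obtain hm' | hm' := (show n + 2 ≤ m + 1 by omega).eq_or_lt
    · rw [← hm', hP.2 _ le_rfl, Nat.sub_self, h0]
    · exact coeff_eq_zero_of_natDegree_lt (hP.1.trans_lt hm')
  · rw [coeff_divX, coeff_divX, hP.2 (m + 1) (by omega), show n + 2 - (m + 1) = n - m + 1 by omega]

end Ring

section CommRing

variable {R : Type*} [CommRing R]

noncomputable def basisExpansion (n : ℕ) (c : ℕ → R) : R[X] :=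
  ∑ i ∈ range (n / 2 + 1), C (c i) * X ^ i * (X + 1) ^ (n - 2 * i)

theorem basisExpansion_eq_sum_smul (n : ℕ) (c : ℕ → R) :
    basisExpansion n c = ∑ i ∈ range (n / 2 + 1), c i • (X ^ i * (X + 1) ^ (n - 2 * i)) := by
  simp only [basisExpansion, smul_eq_C_mul, mul_assoc]

theorem basisExpansion_sub (n : ℕ) (c d : ℕ → R) :
    basisExpansion n (c - d) = basisExpansion n c - basisExpansion n d := by
  simp only [basisExpansion_eq_sum_smul, Pi.sub_apply, sub_smul, sum_sub_distrib]

theorem eq_zero_of_basisExpansion_eq_zero {n : ℕ} {c : ℕ → R} (h : basisExpansion n c = 0)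
    {i : ℕ} (hi : i ≤ n / 2) : c i = 0 := by
  rw [basisExpansion_eq_sum_smul] at h
  exact linearIndependent_iff'.mp (linearIndependent_X_pow_mul_X_add_one_pow (n - 2 * ·)) _ _ h i
    (mem_range.mpr (by omega))

theorem X_add_one_mul_basisExpansion {n : ℕ} {c : ℕ → R} (hc : ∀ i, n / 2 < i → c i = 0) :
    (X + 1) * basisExpansion n c = basisExpansion (n + 1) c := by
  have hrange : range (n / 2 + 1) ⊆ range ((n + 1) / 2 + 1) := range_subset_range.mpr (by omega)
  rw [basisExpansion, basisExpansion, ← sum_subset hrange fun i _ hi => ?_, mul_sum]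
  · refine sum_congr rfl fun i hi => ?_
    rw [show n + 1 - 2 * i = n - 2 * i + 1 by have := mem_range.mp hi; omega, pow_succ]
    ring
  · rw [hc i (by simpa using hi), C_0, zero_mul, zero_mul]

theorem X_mul_basisExpansion (n : ℕ) (c : ℕ → R) :
    X * basisExpansion n c = basisExpansion (n + 2) fun i => if i = 0 then 0 else c (i - 1) := by
  rw [basisExpansion, basisExpansion, mul_sum, show (n + 2) / 2 + 1 = n / 2 + 1 + 1 by omega,
    sum_range_succ' _ (n / 2 + 1)]
  simp only [if_pos, C_0, zero_mul, add_zero, Nat.add_one_ne_zero, if_false, Nat.add_sub_cancel,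
    show ∀ i, n + 2 - 2 * (i + 1) = n - 2 * i by omega]
  exact sum_congr rfl fun i _ => by ring

theorem X_add_one_mul_geom_sub_X_mul_geom (n : ℕ) :
    (X + 1) * ∑ i ∈ range (n + 1), (X : R[X]) ^ i - X * ∑ i ∈ range n, (X : R[X]) ^ i =
      ∑ i ∈ range (n + 2), (X : R[X]) ^ i := by
  rw [sum_range_succ _ (n + 1), sum_range_succ _ n]
  ring

end CommRing

theorem expandsAs_add_one_iff {n : ℕ} {c : ℕ → ℤ} :
    expandsAs (n + 1) c ↔
      (∀ i, n / 2 < i → c i = 0) ∧ basisExpansion n c = ∑ i ∈ range (n + 1), X ^ i :=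
  Iff.rfl

theorem expandsAs_recurrence {n : ℕ} {c c' c'' : ℕ → ℤ} (hc : expandsAs (n + 1) c)
    (hc' : expandsAs (n + 2) c') (hc'' : expandsAs (n + 3) c'') (i : ℕ) :
    c'' i = c' i - (if i = 0 then 0 else c (i - 1)) := by
  rw [expandsAs_add_one_iff] at hc hc' hc''
  have hzero :
      basisExpansion (n + 2) (c'' - (c' - fun i => if i = 0 then 0 else c (i - 1))) = 0 := by
    rw [basisExpansion_sub, basisExpansion_sub, ← X_add_one_mul_basisExpansion hc'.1,
      ← X_mul_basisExpansion, hc.2, hc'.2, hc''.2, X_add_one_mul_geom_sub_X_mul_geom, sub_self]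
  rcases le_or_gt i ((n + 2) / 2) with hi | hi
  · simpa [sub_eq_zero] using eq_zero_of_basisExpansion_eq_zero hzero hi
  · rw [hc''.1 i hi, hc'.1 i (by omega), if_neg (by omega), hc.1 (i - 1) (by omega), sub_zero]

theorem linearIndependent_basisFam (j : ℕ) : LinearIndependent ℤ (basisFam j) :=
  (linearIndependent_X_pow_mul_X_add_one_pow (j - 1 - 2 * ·)).comp _ Fin.val_injective

theorem C_mul_X_add_one_pow_mem_span_basisFam (j : ℕ) (a : ℤ) :
    C a * (X + 1) ^ (j - 1) ∈ span ℤ (Set.range (basisFam j)) := by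
  rw [← smul_eq_C_mul]
  exact smul_mem _ a (subset_span ⟨0, by simp [basisFam]⟩)

theorem X_mul_mem_span_basisFam {k : ℕ} {P : ℤ[X]}
    (hP : P ∈ span ℤ (Set.range (basisFam (k + 1)))) :
    X * P ∈ span ℤ (Set.range (basisFam (k + 3))) := by
  have hsub :
      LinearMap.mulLeft ℤ X '' Set.range (basisFam (k + 1)) ⊆ Set.range (basisFam (k + 3)) := by
    rintro _ ⟨_, ⟨i, rfl⟩, rfl⟩
    refine ⟨⟨i + 1, by omega⟩, ?_⟩
    rw [LinearMap.mulLeft_apply, basisFam, basisFam,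
      show k + 3 - 1 - 2 * (i + 1 : ℕ) = k + 1 - 1 - 2 * i by omega]
    ring
  exact span_mono hsub (span_image (LinearMap.mulLeft ℤ (X : ℤ[X])) ▸ mem_map_of_mem hP)

theorem mem_span_basisFam {j : ℕ} {P : ℤ[X]} (hP : IsPalindromic (j - 1) P) :
    P ∈ span ℤ (Set.range (basisFam j)) := by
  induction j using Nat.strong_induction_on generalizing P with
  | _ j ih =>
    have hQ := hP.sub_C_mul_X_add_one_pow (P.coeff 0)
    have hQ0 : (P - C (P.coeff 0) * (X + 1) ^ (j - 1)).coeff 0 = 0 := by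
      simp [coeff_zero_eq_eval_zero]
    rw [← sub_add_cancel P (C (P.coeff 0) * (X + 1) ^ (j - 1))]
    refine add_mem ?_ (C_mul_X_add_one_pow_mem_span_basisFam j _)
    generalize P - C (P.coeff 0) * (X + 1) ^ (j - 1) = Q at hQ hQ0 ⊢
    rcases le_or_gt j 2 with hj | hj
    · rw [hQ.eq_zero hQ0 (by omega)]
      exact zero_mem _
    · obtain ⟨k, rfl⟩ : ∃ k, j = k + 3 := ⟨j - 3, by omega⟩
      rw [← X_mul_divX_add Q, hQ0, C_0, add_zero]
      exact X_mul_mem_span_basisFam (ih (k + 1) (by omega) (hQ.divX hQ0))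

theorem stmt_8_general (j : ℕ) :
    (LinearIndependent ℤ (basisFam j) ∧
      ∀ P : Polynomial ℤ,
        P.natDegree ≤ j - 1 →
        (∀ m : ℕ, m ≤ j - 1 → P.coeff m = P.coeff (j - 1 - m)) →
        P ∈ Submodule.span ℤ (Set.range (basisFam j))) ∧
    (2 ≤ j →
      ∀ c c' c'' : ℕ → ℤ,
        expandsAs (j - 1) c → expandsAs j c' → expandsAs (j + 1) c'' →
        ∀ i : ℕ, c'' i = c' i - (if i = 0 then 0 else c (i - 1))) := by
  refine ⟨⟨linearIndependent_basisFam j, fun P hdeg hsym => mem_span_basisFam ⟨hdeg, hsym⟩⟩, ?_⟩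
  intro hj c c' c'' hc hc' hc'' i
  obtain ⟨n, rfl⟩ : ∃ n, j = n + 2 := ⟨j - 2, by omega⟩
  exact expandsAs_recurrence hc hc' hc'' i

theorem stmt_8 (j : ℕ) (hj : 1 ≤ j) :
    (LinearIndependent ℤ (basisFam j) ∧
      ∀ P : Polynomial ℤ,
        P.natDegree ≤ j - 1 →
        (∀ m : ℕ, m ≤ j - 1 → P.coeff m = P.coeff (j - 1 - m)) →
        P ∈ Submodule.span ℤ (Set.range (basisFam j))) ∧
    (2 ≤ j →
      ∀ c c' c'' : ℕ → ℤ,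
        expandsAs (j - 1) c → expandsAs j c' → expandsAs (j + 1) c'' →
        ∀ i : ℕ, c'' i = c' i - (if i = 0 then 0 else c (i - 1))) :=
  stmt_8_general j
end

section
/- Fix ℓ ≥ 3 and t with 0 ≤ b ≤ ℓ−2 where t = aℓ + b. Define l_t(t+2k) = Σ_{i≥0} (w(t+2iℓ, k−iℓ) − w(t+2iℓ+2(ℓ−1−b), k−iℓ−(ℓ−1−b))), where w(s,m) = C(s+2m,m) − C(s+2m,m−1) (zero when m<0). Then the generating function L_t(x) = Σ_{k≥0} l_t(t+2k) x^k equals (d(x)+1)^{t+1}·(1 − d(x)^{ℓ−1−b})/(1 − d(x)^{ℓ}) in ℚ[[x]], where d(x) = x c(x)² and c(x) is the Catalan series. -/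
/-!
Since `c = 1 + x c²`, we have `c^(s+2) = c^(s+1) + x c^(s+3)`, which on coefficients is Pascal's
recursion for the ballot numbers; hence `Σ_m w(s,m) x^m = c^(s+1)`, and `w(t+2j, k-j)` is the
`x^k` coefficient of `d^j c^(t+1)`. With `r = ℓ-1-b`, the number `l_t(t+2k)` is therefore the
`x^k` coefficient of `c^(t+1) (1 - d^r) Σ_{i ≤ k} d^(iℓ)`. As `d` has no constant term, the
terms with `i > k` do not reach `x^k`, so this is also the `x^k` coefficient of
`c^(t+1) (1 - d^r) / (1 - d^ℓ)`.
-/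

open PowerSeries

/-- The Catalan generating function `c(x)` in `ℚ[[x]]`. -/
noncomputable def catalanSeries : PowerSeries ℚ :=
  PowerSeries.mk fun n => (catalan n : ℚ)

/-- `d(x) = x·c(x)²`. -/
noncomputable def dSeries : PowerSeries ℚ :=
  PowerSeries.X * _root_.catalanSeries ^ 2

/-- The ballot numbers `w(s,m) = C(s+2m,m) − C(s+2m,m−1)`, with `w(s,m) = 0`
for `m < 0`. -/
noncomputable def wZ (s : ℕ) (m : ℤ) : ℚ :=
  if 0 ≤ m then
    (Nat.choose (s + 2 * m.toNat) m.toNat : ℚ) -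
      (if m = 0 then 0 else (Nat.choose (s + 2 * m.toNat) (m.toNat - 1) : ℚ))
  else 0

/-- `l_t(t+2k) = Σ_{i≥0} (w(t+2iℓ, k−iℓ) − w(t+2iℓ+2(ℓ−1−b), k−iℓ−(ℓ−1−b)))`;
all terms with `i > k` vanish (as `ℓ ≥ 1`), so the sum over `i ≤ k` is the full sum. -/
noncomputable def lCoeff (ℓ t b k : ℕ) : ℚ :=
  ∑ i ∈ Finset.range (k + 1),
    (wZ (t + 2 * i * ℓ) ((k : ℤ) - i * ℓ) -
      wZ (t + 2 * i * ℓ + 2 * (ℓ - 1 - b)) ((k : ℤ) - i * ℓ - (ℓ - 1 - b)))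

open Finset

lemma catalanSeries_eq_one_add_X_mul_sq :
    _root_.catalanSeries = 1 + X * _root_.catalanSeries ^ 2 := by
  have h := congrArg (map (Nat.castRingHom ℚ)) PowerSeries.catalanSeries_sq_mul_X_add_one
  have hmap : map (Nat.castRingHom ℚ) PowerSeries.catalanSeries = _root_.catalanSeries := by
    ext n; simp [_root_.catalanSeries]
  simp only [map_add, map_mul, map_pow, map_X, map_one, hmap] at h
  linear_combination -h

lemma catalanSeries_eq_one_add_dSeries : _root_.catalanSeries = 1 + dSeries :=
  catalanSeries_eq_one_add_X_mul_sq

lemma constantCoeff_catalanSeries : constantCoeff _root_.catalanSeries = 1 := by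
  simp [_root_.catalanSeries, ← coeff_zero_eq_constantCoeff_apply]

lemma constantCoeff_dSeries : constantCoeff dSeries = 0 := by
  simp [dSeries]

lemma dSeries_pow_mul_catalanSeries_pow (n m : ℕ) :
    dSeries ^ n * _root_.catalanSeries ^ m = X ^ n * _root_.catalanSeries ^ (2 * n + m) := by
  rw [dSeries, mul_pow, ← pow_mul, pow_add]
  ring

/-- The ballot number `w(s, m)` for `m : ℕ`, split by cases so that `m - 1` is never truncated. -/
def ballot (s : ℕ) : ℕ → ℚ
  | 0 => 1
  | m + 1 => (s + 2 * (m + 1)).choose (m + 1) - (s + 2 * (m + 1)).choose m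

lemma ballot_zero_left (m : ℕ) : ballot 0 m = catalan m := by
  cases m with
  | zero => simp [ballot]
  | succ m =>
    have hchoose :
        ((2 * (m + 1)).choose (m + 1) : ℚ) * (m + 1) = (2 * (m + 1)).choose m * (m + 2) := by
      have h := Nat.choose_succ_right_eq (2 * (m + 1)) m
      rw [show 2 * (m + 1) - m = m + 2 by omega] at h
      exact_mod_cast h
    have hcatalan : ((m : ℚ) + 2) * catalan (m + 1) = (2 * (m + 1)).choose (m + 1) := by
      have h := succ_mul_catalan_eq_centralBinom (m + 1)
      rw [Nat.centralBinom] at h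
      exact_mod_cast h
    refine mul_left_cancel₀ (show (m : ℚ) + 2 ≠ 0 by positivity) ?_
    simp only [ballot, zero_add]
    linear_combination hchoose - hcatalan

lemma ballot_succ_succ (s m : ℕ) :
    ballot (s + 1) (m + 1) = ballot s (m + 1) + ballot (s + 2) m := by
  cases m with
  | zero => simp [ballot]; ring
  | succ m =>
    simp only [ballot]
    rw [show s + 1 + 2 * (m + 1 + 1) = s + 2 * (m + 1 + 1) + 1 by ring,
      show s + 2 + 2 * (m + 1) = s + 2 * (m + 1 + 1) by ring,
      Nat.choose_succ_succ', Nat.choose_succ_succ' _ m]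
    push_cast
    ring

lemma coeff_catalanSeries_pow (m s : ℕ) :
    coeff m (_root_.catalanSeries ^ (s + 1)) = ballot s m := by
  induction m generalizing s with
  | zero => simp [ballot, constantCoeff_catalanSeries]
  | succ m ihm =>
    induction s with
    | zero => simp [ballot_zero_left, _root_.catalanSeries]
    | succ s ihs =>
      have hpow : _root_.catalanSeries ^ (s + 2) =
          _root_.catalanSeries ^ (s + 1) + X * _root_.catalanSeries ^ (s + 3) := by
        linear_combination _root_.catalanSeries ^ (s + 1) * catalanSeries_eq_one_add_X_mul_sq
      rw [hpow, map_add, coeff_succ_X_mul, ihs, ihm, ballot_succ_succ]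

lemma wZ_natCast (s m : ℕ) : wZ s m = ballot s m := by
  cases m with
  | zero => simp [wZ, ballot]
  | succ m => simp [wZ, ballot, show (0 : ℤ) ≤ m + 1 by omega, show (m : ℤ) + 1 ≠ 0 by omega]

lemma wZ_sub_eq_coeff (s j k : ℕ) :
    wZ s ((k : ℤ) - j) = coeff k (X ^ j * _root_.catalanSeries ^ (s + 1)) := by
  rw [coeff_X_pow_mul']
  split_ifs with hjk
  · rw [coeff_catalanSeries_pow, ← wZ_natCast, Nat.cast_sub hjk]
  · exact if_neg (by omega)

lemma wZ_eq_coeff_dSeries_pow_mul (t j k : ℕ) :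
    wZ (t + 2 * j) ((k : ℤ) - j) = coeff k (dSeries ^ j * _root_.catalanSeries ^ (t + 1)) := by
  rw [wZ_sub_eq_coeff, dSeries_pow_mul_catalanSeries_pow, add_assoc, add_left_comm]

section GeomSum

variable {R : Type*} [CommRing R] {g q : R⟦X⟧}

lemma coeff_mul_geom_sum_of_lt (hq : constantCoeff q = 0) {j n : ℕ} (hjn : j < n) :
    coeff j (g * ∑ i ∈ range n, q ^ i) = coeff j (g * ∑ i ∈ range (j + 1), q ^ i) := by
  have htail : X ^ (j + 1) ∣ g * ∑ i ∈ Ico (j + 1) n, q ^ i :=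
    (dvd_sum fun i hi => (pow_dvd_pow X (mem_Ico.1 hi).1).trans
      (pow_dvd_pow_of_dvd (X_dvd_iff.2 hq) i)).mul_left g
  rw [← sum_range_add_sum_Ico _ hjn, mul_add, map_add, X_pow_dvd_iff.1 htail j j.lt_succ_self,
    add_zero]

lemma mul_one_sub_eq_of_coeff_eq_geom_sum {L : R⟦X⟧} (hq : constantCoeff q = 0)
    (hL : ∀ k, coeff k L = coeff k (g * ∑ i ∈ range (k + 1), q ^ i)) : L * (1 - q) = g := by
  ext k
  have htrunc : trunc (k + 1) L = trunc (k + 1) (g * ∑ i ∈ range (k + 1), q ^ i) := by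
    ext j
    rw [coeff_trunc, coeff_trunc]
    split_ifs with hj
    · rw [hL, coeff_mul_geom_sum_of_lt hq hj]
    · rfl
  have hvanish : coeff k (g * q ^ (k + 1)) = 0 :=
    X_pow_dvd_iff.1 ((pow_dvd_pow_of_dvd (X_dvd_iff.2 hq) _).mul_left g) k k.lt_succ_self
  calc coeff k (L * (1 - q))
      = coeff k (trunc (k + 1) ((trunc (k + 1) L : R⟦X⟧) * (1 - q)) : R⟦X⟧) := by
        rw [trunc_trunc_mul, coeff_coe_trunc_of_lt k.lt_succ_self]
    _ = coeff k (g * (1 - q ^ (k + 1))) := by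
        rw [htrunc, trunc_trunc_mul, coeff_coe_trunc_of_lt k.lt_succ_self, mul_assoc,
          geom_sum_mul_neg]
    _ = coeff k g := by rw [mul_one_sub, map_sub, hvanish, sub_zero]

end GeomSum

lemma lCoeff_eq_coeff_mul_geom_sum {ℓ b : ℕ} (hb : b < ℓ) (t k : ℕ) :
    lCoeff ℓ t b k = coeff k (_root_.catalanSeries ^ (t + 1) * (1 - dSeries ^ (ℓ - 1 - b)) *
      ∑ i ∈ range (k + 1), (dSeries ^ ℓ) ^ i) := by
  rw [lCoeff, mul_sum, map_sum]
  refine sum_congr rfl fun i _ => ?_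
  have h₁ := wZ_eq_coeff_dSeries_pow_mul t (i * ℓ) k
  have h₂ := wZ_eq_coeff_dSeries_pow_mul t (i * ℓ + (ℓ - 1 - b)) k
  rw [show t + 2 * (i * ℓ) = t + 2 * i * ℓ by ring, Nat.cast_mul] at h₁
  rw [show t + 2 * (i * ℓ + (ℓ - 1 - b)) = t + 2 * i * ℓ + 2 * (ℓ - 1 - b) by ring,
    Nat.cast_add, Nat.cast_mul, Nat.cast_sub (by omega), Nat.cast_sub (by omega), Nat.cast_one,
    ← sub_sub] at h₂
  rw [h₁, h₂, ← map_sub]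
  congr 1
  ring

theorem stmt_10 (ℓ a b : ℕ) (hℓ : 3 ≤ ℓ) (hb : b ≤ ℓ - 2) :
    PowerSeries.mk (fun k => lCoeff ℓ (a * ℓ + b) b k) =
      (dSeries + 1) ^ (a * ℓ + b + 1) * (1 - dSeries ^ (ℓ - 1 - b)) *
        (1 - dSeries ^ ℓ)⁻¹ := by
  have hq : constantCoeff (dSeries ^ ℓ) = 0 := by
    rw [map_pow, constantCoeff_dSeries, zero_pow (by omega)]
  rw [add_comm dSeries 1, ← catalanSeries_eq_one_add_dSeries,
    eq_mul_inv_iff_mul_eq (by simp [hq])]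
  refine mul_one_sub_eq_of_coeff_eq_geom_sum hq fun k => ?_
  rw [coeff_mk, lCoeff_eq_coeff_mul_geom_sum (by omega)]
end

section
/- In the Clifford algebra C_n with generators γ_i satisfying γ_iγ_j + γ_jγ_i = δ_{ij}·1, the elements f_j = (1/√2)(1 + 2i·γ_jγ_{j+1}) for 1 ≤ j ≤ n−1 satisfy the Temperley-Lieb relations f_j² = √2·f_j, f_j f_{j±1} f_j = f_j, and f_j f_k = f_k f_j for |j−k| ≥ 2. -/
/-- The quadratic form `Q(x) = (1/2)Σ x_i²` on `ℂⁿ`; in its Clifford algebra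
the generators `γ_i = ι(e_i)` satisfy `γ_iγ_j + γ_jγ_i = δ_{ij}`. -/
noncomputable def cliffQ (n : ℕ) : QuadraticForm ℂ (Fin n → ℂ) :=
  QuadraticMap.weightedSumSquares ℂ (fun _ : Fin n => (1 / 2 : ℂ))

/-- The generators `γ_1, …, γ_n` (indexed here by `1 ≤ i ≤ n`) of the Clifford
algebra `C_n`; we set `γ_i = 0` for indices out of range. -/
noncomputable def gam (n : ℕ) (i : ℕ) : CliffordAlgebra (cliffQ n) :=
  if h : 1 ≤ i ∧ i ≤ n then
    CliffordAlgebra.ι (cliffQ n) (Pi.single (⟨i - 1, by omega⟩ : Fin n) 1)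
  else 0

/-- `f_j = (1/√2)(1 + 2i·γ_jγ_{j+1})`. -/
noncomputable def fTL (n : ℕ) (j : ℕ) : CliffordAlgebra (cliffQ n) :=
  ((Real.sqrt 2 : ℂ))⁻¹ • (1 + (2 * Complex.I) • (gam n j * gam n (j + 1)))

lemma cliffQ_single (n : ℕ) (i : Fin n) : cliffQ n (Pi.single i 1) = 1 / 2 := by
  simp [cliffQ, QuadraticMap.weightedSumSquares_apply, Pi.single_apply]

lemma cliffQ_polar (n : ℕ) (i j : Fin n) (h : i ≠ j) :
    QuadraticMap.polar (cliffQ n) (Pi.single i 1) (Pi.single j 1) = 0 := by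
  simp only [QuadraticMap.polar, cliffQ, QuadraticMap.weightedSumSquares_apply,
    Pi.add_apply, Pi.single_apply]
  rw [Finset.sum_congr rfl (g := fun k => (if k = i then (1/2:ℂ) else 0) + (if k = j then (1/2:ℂ) else 0))]
  · simp [Finset.sum_add_distrib, Pi.single_apply]
  · intro k _
    by_cases hk : k = i <;> by_cases hk' : k = j <;> simp_all

lemma gam_sq (n i : ℕ) (h1 : 1 ≤ i) (h2 : i ≤ n) :
    gam n i * gam n i = ((1/2 : ℂ)) • 1 := by
  rw [gam, dif_pos ⟨h1, h2⟩, CliffordAlgebra.ι_sq_scalar, cliffQ_single,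
    Algebra.algebraMap_eq_smul_one]

lemma gam_anticomm (n i j : ℕ) (hi1 : 1 ≤ i) (hi2 : i ≤ n) (hj1 : 1 ≤ j) (hj2 : j ≤ n)
    (hij : i ≠ j) : gam n j * gam n i = -(gam n i * gam n j) := by
  rw [gam, gam, dif_pos ⟨hj1, hj2⟩, dif_pos ⟨hi1, hi2⟩]
  have := CliffordAlgebra.ι_mul_ι_add_swap (Q := cliffQ n)
    (Pi.single (⟨i - 1, by omega⟩ : Fin n) 1) (Pi.single (⟨j - 1, by omega⟩ : Fin n) 1)
  rw [cliffQ_polar n _ _ (by simp [Fin.ext_iff]; omega), map_zero] at this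
  rw [eq_neg_iff_add_eq_zero, add_comm]
  exact this


section TLcore
variable {A : Type*} [Ring A] [Algebra ℂ A]

lemma hJ : (2*Complex.I) * (2*Complex.I) = (-4 : ℂ) := by
  have := Complex.I_mul_I
  ring_nf
  rw [Complex.I_sq]
  ring

lemma sqrt2_sq : (Real.sqrt 2 : ℂ) * (Real.sqrt 2 : ℂ) = 2 := by
  norm_cast
  rw [Real.mul_self_sqrt (by norm_num)]

lemma sqrt2_ne : (Real.sqrt 2 : ℂ) ≠ 0 := by
  simp [Real.sqrt_eq_zero']

lemma pair_sq (x y : A) (hxx : x*x = (1/2:ℂ)•1) (hyy : y*y = (1/2:ℂ)•1)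
    (hyx : y*x = -(x*y)) : (x*y)*(x*y) = (-(1/4):ℂ)•(1:A) := by
  have h1 : (x*y)*(x*y) = x*(y*x)*y := by noncomm_ring
  rw [h1, hyx]
  have h2 : x*(-(x*y))*y = -((x*x)*(y*y)) := by noncomm_ring
  rw [h2, hxx, hyy]
  simp [smul_smul, mul_smul_comm, smul_mul_assoc]
  norm_num

lemma pair_ab (x y z : A) (hyy : y*y = (1/2:ℂ)•1) :
    (x*y)*(y*z) = (1/2:ℂ)•(x*z) := by
  have h1 : (x*y)*(y*z) = x*(y*y)*z := by noncomm_ring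
  rw [h1, hyy]
  simp [mul_smul_comm, smul_mul_assoc]

lemma pair_ba (x y z : A) (hyy : y*y = (1/2:ℂ)•1)
    (hyx : y*x = -(x*y)) (hzy : z*y = -(y*z)) (hzx : z*x = -(x*z)) :
    (y*z)*(x*y) = -((x*y)*(y*z)) := by
  have h1 : (y*z)*(x*y) = y*(z*x)*y := by noncomm_ring
  rw [h1, hzx]
  have h2 : y*(-(x*z))*y = -((y*x)*(z*y)) := by noncomm_ring
  rw [h2, hyx, hzy]
  have h3 : -(-(x*y)* -(y*z)) = -((x*y)*(y*z)) := by noncomm_ring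
  rw [h3]

lemma pair_aba (x y z : A) (hxx : x*x = (1/2:ℂ)•1) (hyy : y*y = (1/2:ℂ)•1)
    (hzy : z*y = -(y*z)) (hzx : z*x = -(x*z)) :
    (x*y)*(y*z)*(x*y) = (1/4:ℂ)•(y*z) := by
  rw [pair_ab x y z hyy]
  have h1 : ((1/2:ℂ)•(x*z))*(x*y) = (1/2:ℂ)•(x*(z*x)*y) := by
    simp [smul_mul_assoc]; noncomm_ring
  rw [h1, hzx]
  have h2 : x*(-(x*z))*y = -((x*x)*(z*y)) := by noncomm_ring
  rw [h2, hzy, hxx]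
  simp [smul_smul, mul_smul_comm, smul_mul_assoc]
  norm_num

lemma pair_bab (x y z : A) (hyy : y*y = (1/2:ℂ)•1) (hzz : z*z = (1/2:ℂ)•1)
    (hyx : y*x = -(x*y)) (hzy : z*y = -(y*z)) (hzx : z*x = -(x*z)) :
    (y*z)*(x*y)*(y*z) = (1/4:ℂ)•(x*y) := by
  rw [pair_ba x y z hyy hyx hzy hzx, pair_ab x y z hyy]
  have h1 : (-((1/2:ℂ)•(x*z)))*(y*z) = -((1/2:ℂ)•(x*(z*y)*z)) := by
    simp [smul_mul_assoc]; noncomm_ring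
  rw [h1, hzy]
  have h2 : x*(-(y*z))*z = -((x*y)*(z*z)) := by noncomm_ring
  rw [h2, hzz]
  simp [smul_smul, mul_smul_comm, smul_mul_assoc]
  norm_num

lemma pair_comm (x y z w : A) (hzx : z*x = -(x*z)) (hzy : z*y = -(y*z))
    (hwx : w*x = -(x*w)) (hwy : w*y = -(y*w)) :
    (x*y)*(z*w) = (z*w)*(x*y) := by
  symm
  calc (z*w)*(x*y) = z*(w*x)*y := by noncomm_ring
    _ = z*(-(x*w))*y := by rw [hwx]
    _ = -((z*x)*(w*y)) := by noncomm_ring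
    _ = -((-(x*z))*(-(y*w))) := by rw [hzx, hwy]
    _ = -(x*(z*y)*w) := by noncomm_ring
    _ = -(x*(-(y*z))*w) := by rw [hzy]
    _ = (x*y)*(z*w) := by noncomm_ring
end TLcore

section Fsec
variable {A : Type*} [Ring A] [Algebra ℂ A]

lemma exp2 (u : A) : (1+u)*(1+u) = 1+u+u+u*u := by noncomm_ring

lemma exp3 (u t : A) :
    (1+u)*(1+t)*(1+u) = 1+u+u+t+u*u+(u*t+t*u)+u*t*u := by noncomm_ring

lemma expmul (u t : A) : (1+u)*(1+t) = 1+u+t+u*t := by noncomm_ring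

lemma usq (a : A) (haa : a*a = (-(1/4):ℂ)•1) :
    ((2*Complex.I)•a) * ((2*Complex.I)•a) = (1:A) := by
  rw [smul_mul_smul_comm, haa, hJ, smul_smul]
  norm_num

lemma v_sq (a : A) (haa : a*a = (-(1/4):ℂ)•1) :
    (1 + (2*Complex.I)•a) * (1 + (2*Complex.I)•a) = (2:ℂ)•(1 + (2*Complex.I)•a) := by
  rw [exp2, usq a haa]
  module

lemma inv2 : ((Real.sqrt 2 : ℂ))⁻¹ * ((Real.sqrt 2 : ℂ))⁻¹ * 2 = 1 := by
  rw [← mul_inv, sqrt2_sq]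
  norm_num

lemma F_sq (a : A) (haa : a*a = (-(1/4):ℂ)•1) :
    (((Real.sqrt 2 : ℂ))⁻¹ • (1 + (2*Complex.I)•a)) ^ 2
      = (Real.sqrt 2 : ℂ) • (((Real.sqrt 2 : ℂ))⁻¹ • (1 + (2*Complex.I)•a)) := by
  have h1 : ((Real.sqrt 2 : ℂ))⁻¹ * ((Real.sqrt 2 : ℂ))⁻¹ * 2
      = (Real.sqrt 2 : ℂ) * ((Real.sqrt 2 : ℂ))⁻¹ := by
    rw [inv2, mul_inv_cancel₀ sqrt2_ne]
  rw [sq, smul_mul_smul_comm, v_sq a haa, smul_smul, smul_smul, h1]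

lemma vwv (a b : A) (haa : a*a = (-(1/4):ℂ)•1) (hba : b*a = -(a*b))
    (haba : a*b*a = (1/4:ℂ)•b) :
    (1 + (2*Complex.I)•a) * (1 + (2*Complex.I)•b) * (1 + (2*Complex.I)•a)
      = (2:ℂ)•(1 + (2*Complex.I)•a) := by
  have e2 : ((2*Complex.I)•a) * ((2*Complex.I)•b) + ((2*Complex.I)•b) * ((2*Complex.I)•a)
      = 0 := by
    rw [smul_mul_smul_comm, smul_mul_smul_comm, hba, smul_neg]
    simp
  have e3 : ((2*Complex.I)•a) * ((2*Complex.I)•b) * ((2*Complex.I)•a)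
      = -((2*Complex.I)•b) := by
    rw [smul_mul_smul_comm, smul_mul_smul_comm, haba, smul_smul]
    rw [show (2*Complex.I)*(2*Complex.I)*(2*Complex.I)*(1/4 : ℂ) = -(2*Complex.I) by
      linear_combination (2*Complex.I)*Complex.I_sq]
    simp
  rw [exp3, usq a haa, e2, e3]
  module

lemma F_mid (a b : A) (haa : a*a = (-(1/4):ℂ)•1) (hba : b*a = -(a*b))
    (haba : a*b*a = (1/4:ℂ)•b) :
    (((Real.sqrt 2 : ℂ))⁻¹ • (1 + (2*Complex.I)•a))
      * (((Real.sqrt 2 : ℂ))⁻¹ • (1 + (2*Complex.I)•b))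
      * (((Real.sqrt 2 : ℂ))⁻¹ • (1 + (2*Complex.I)•a))
      = ((Real.sqrt 2 : ℂ))⁻¹ • (1 + (2*Complex.I)•a) := by
  have h2 : ((Real.sqrt 2 : ℂ))⁻¹ * ((Real.sqrt 2 : ℂ))⁻¹ * ((Real.sqrt 2 : ℂ))⁻¹ * 2
      = ((Real.sqrt 2 : ℂ))⁻¹ := by
    calc ((Real.sqrt 2 : ℂ))⁻¹ * ((Real.sqrt 2 : ℂ))⁻¹ * ((Real.sqrt 2 : ℂ))⁻¹ * 2
        = (((Real.sqrt 2 : ℂ))⁻¹ * ((Real.sqrt 2 : ℂ))⁻¹ * 2) * ((Real.sqrt 2 : ℂ))⁻¹ := by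
          ring
      _ = ((Real.sqrt 2 : ℂ))⁻¹ := by rw [inv2, one_mul]
  rw [smul_mul_smul_comm, smul_mul_smul_comm, vwv a b haa hba haba, smul_smul, h2]

lemma F_comm (a b : A) (hab : a*b = b*a) :
    (((Real.sqrt 2 : ℂ))⁻¹ • (1 + (2*Complex.I)•a))
      * (((Real.sqrt 2 : ℂ))⁻¹ • (1 + (2*Complex.I)•b))
      = (((Real.sqrt 2 : ℂ))⁻¹ • (1 + (2*Complex.I)•b))
      * (((Real.sqrt 2 : ℂ))⁻¹ • (1 + (2*Complex.I)•a)) := by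
  rw [smul_mul_smul_comm, smul_mul_smul_comm]
  congr 1
  rw [expmul, expmul, smul_mul_smul_comm, smul_mul_smul_comm, hab]
  module

end Fsec

theorem stmt_16 (n : ℕ) :
    (∀ j : ℕ, 1 ≤ j → j ≤ n - 1 →
        fTL n j ^ 2 = (Real.sqrt 2 : ℂ) • fTL n j) ∧
    (∀ j : ℕ, 1 ≤ j → j + 1 ≤ n - 1 →
        fTL n j * fTL n (j + 1) * fTL n j = fTL n j ∧
        fTL n (j + 1) * fTL n j * fTL n (j + 1) = fTL n (j + 1)) ∧
    (∀ j k : ℕ, 1 ≤ j → j ≤ n - 1 → 1 ≤ k → k ≤ n - 1 → j + 2 ≤ k →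
        fTL n j * fTL n k = fTL n k * fTL n j) := by
  refine ⟨?_, ?_, ?_⟩
  · intro j hj1 hj2
    have hn : 2 ≤ n := by omega
    rw [fTL]
    exact F_sq _ (pair_sq _ _ (gam_sq n j (by omega) (by omega))
      (gam_sq n (j+1) (by omega) (by omega))
      (gam_anticomm n j (j+1) (by omega) (by omega) (by omega) (by omega) (by omega)))
  · intro j hj1 hj2
    have hn : 3 ≤ n := by omega
    have hxx := gam_sq n j (by omega) (by omega)
    have hyy := gam_sq n (j+1) (by omega) (by omega)
    have hzz := gam_sq n (j+2) (by omega) (by omega)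
    have hyx := gam_anticomm n j (j+1) (by omega) (by omega) (by omega) (by omega) (by omega)
    have hzy := gam_anticomm n (j+1) (j+2) (by omega) (by omega) (by omega) (by omega) (by omega)
    have hzx := gam_anticomm n j (j+2) (by omega) (by omega) (by omega) (by omega) (by omega)
    have hj2' : j + 1 + 1 = j + 2 := by omega
    constructor
    · rw [fTL, fTL, hj2']
      exact F_mid _ _ (pair_sq _ _ hxx hyy hyx)
        (pair_ba _ _ _ hyy hyx hzy hzx)
        (pair_aba _ _ _ hxx hyy hzy hzx)
    · rw [fTL, fTL, hj2']
      refine F_mid _ _ (pair_sq _ _ hyy hzz hzy) ?_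
        (pair_bab _ _ _ hyy hzz hyx hzy hzx)
      rw [pair_ba _ _ _ hyy hyx hzy hzx, neg_neg]
  · intro j k hj1 hj2 hk1 hk2 hjk
    have hn : 2 ≤ n := by omega
    have hzx := gam_anticomm n j k (by omega) (by omega) (by omega) (by omega) (by omega)
    have hzy := gam_anticomm n (j+1) k (by omega) (by omega) (by omega) (by omega) (by omega)
    have hwx := gam_anticomm n j (k+1) (by omega) (by omega) (by omega) (by omega) (by omega)
    have hwy := gam_anticomm n (j+1) (k+1) (by omega) (by omega) (by omega) (by omega) (by omega)
    rw [fTL, fTL]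
    exact F_comm _ _ (pair_comm _ _ _ _ hzx hzy hwx hwy)
end

section
/- Define an abelian group K with ℤ-basis {[L_0],…,[L_{ℓ−2}]} for fixed ℓ ≥ 3, and a product [L_s]∘[L_t] = Σ_{r ≡ s+t (mod 2), |s−t| ≤ r ≤ m(s,t)} [L_r] where m(s,t) = min{s+t, 2(ℓ−2)−(s+t)}. Then this product is commutative and associative (K is the fusion ring of \hat{sl}_2 at level ℓ−2). -/
/-- The fusion structure constant: `[L_r]` occurs in `[L_s]∘[L_t]` iff
`r ≡ s + t (mod 2)` and `|s−t| ≤ r ≤ m(s,t)` with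
`m(s,t) = min{s+t, 2(ℓ−2)−(s+t)}`. -/
def fusionCoeff (ℓ : ℕ) (s t r : Fin (ℓ - 1)) : ℤ :=
  if ((s : ℕ) + t + r) % 2 = 0 ∧
      (s : ℕ) - t ≤ r ∧ (t : ℕ) - s ≤ r ∧
      (r : ℕ) ≤ min ((s : ℕ) + t) (2 * (ℓ - 2) - ((s : ℕ) + t))
  then 1 else 0

/-- The bilinear fusion product on the free `ℤ`-module `K` with basis
`[L_0], …, [L_{ℓ−2}]` (elements written in coordinates). -/
def fusionMul (ℓ : ℕ) (x y : Fin (ℓ - 1) → ℤ) : Fin (ℓ - 1) → ℤ :=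
  fun r => ∑ s : Fin (ℓ - 1), ∑ t : Fin (ℓ - 1), x s * y t * fusionCoeff ℓ s t r

/-- Symmetric characterization of the fusion coefficient. -/
lemma coeff_iff (ℓ : ℕ) (hℓ : 3 ≤ ℓ) (s t r : Fin (ℓ - 1)) :
    fusionCoeff ℓ s t r =
      if ((s:ℕ) + t + r) % 2 = 0 ∧ (s:ℕ) ≤ (t:ℕ) + r ∧ (t:ℕ) ≤ (s:ℕ) + r ∧
         (r:ℕ) ≤ (s:ℕ) + t ∧ (s:ℕ) + t + r ≤ 2 * (ℓ - 2) then 1 else 0 := by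
  have hs := s.isLt; have ht := t.isLt; have hr := r.isLt
  unfold fusionCoeff
  split_ifs with h1 h2 <;> first | rfl | (exfalso; omega)

lemma mul_ind (P Q : Prop) [Decidable P] [Decidable Q] :
    (if P then (1:ℤ) else 0) * (if Q then (1:ℤ) else 0) = if P ∧ Q then (1:ℤ) else 0 := by
  split_ifs <;> simp_all

/-- Counting integers of fixed parity in an interval. -/
lemma countLem (A B : ℤ) (hA : 0 ≤ A) (n : ℕ) :
    (∑ p ∈ Finset.range n, if A ≤ (p:ℤ) ∧ (p:ℤ) ≤ B ∧ (p:ℤ) % 2 = A % 2 then (1:ℤ) else 0)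
    = if A ≤ min B ((n:ℤ) - 1) then (min B ((n:ℤ)-1) - A)/2 + 1 else 0 := by
  induction n with
  | zero => simp; omega
  | succ n ih =>
    rw [Finset.sum_range_succ, ih]
    push_cast
    split_ifs <;> omega

lemma H1 (a b c d : ℤ) : min a b - max c d = min (min (a-c) (a-d)) (min (b-c) (b-d)) := by
  omega

/-- The key combinatorial identity: the min-max difference is symmetric. -/
lemma diffLem (k s t u r : ℤ) :
    min (min (s+t) (u+r)) (min (2*k-(s+t)) (2*k-(u+r)))
      - max (max (s-t) (t-s)) (max (u-r) (r-u))
    = min (min (t+u) (s+r)) (min (2*k-(t+u)) (2*k-(s+r)))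
      - max (max (t-u) (u-t)) (max (s-r) (r-s)) := by
  simp only [H1]; ring_nf; ac_rfl

set_option maxHeartbeats 2000000 in
/-- Associativity at the level of structure constants. -/
lemma core (ℓ : ℕ) (hℓ : 3 ≤ ℓ) (s t u r : Fin (ℓ - 1)) :
    (∑ p : Fin (ℓ - 1), fusionCoeff ℓ s t p * fusionCoeff ℓ p u r)
    = ∑ q : Fin (ℓ - 1), fusionCoeff ℓ t u q * fusionCoeff ℓ s q r := by
  have hs : (s:ℕ) ≤ ℓ - 2 := by have := s.isLt; omega
  have ht : (t:ℕ) ≤ ℓ - 2 := by have := t.isLt; omega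
  have hu : (u:ℕ) ≤ ℓ - 2 := by have := u.isLt; omega
  have hr : (r:ℕ) ≤ ℓ - 2 := by have := r.isLt; omega
  by_cases hpar : ((s:ℕ) + t + u + r) % 2 = 0
  · obtain ⟨k, hk⟩ : ∃ k : ℤ, k = ((ℓ - 2 : ℕ) : ℤ) := ⟨_, rfl⟩
    obtain ⟨A, hA⟩ : ∃ A : ℤ, A = max (max ((s:ℕ) - (t:ℕ) : ℤ) ((t:ℕ) - (s:ℕ))) (max ((u:ℕ) - (r:ℕ) : ℤ) ((r:ℕ) - (u:ℕ))) := ⟨_, rfl⟩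
    obtain ⟨B, hB⟩ : ∃ B : ℤ, B = min (min (((s:ℕ):ℤ) + (t:ℕ)) (((u:ℕ):ℤ) + (r:ℕ))) (min (2*k - (((s:ℕ):ℤ) + (t:ℕ))) (2*k - (((u:ℕ):ℤ) + (r:ℕ)))) := ⟨_, rfl⟩
    obtain ⟨A', hA'⟩ : ∃ A' : ℤ, A' = max (max ((t:ℕ) - (u:ℕ) : ℤ) ((u:ℕ) - (t:ℕ))) (max ((s:ℕ) - (r:ℕ) : ℤ) ((r:ℕ) - (s:ℕ))) := ⟨_, rfl⟩
    obtain ⟨B', hB'⟩ : ∃ B' : ℤ, B' = min (min (((t:ℕ):ℤ) + (u:ℕ)) (((s:ℕ):ℤ) + (r:ℕ))) (min (2*k - (((t:ℕ):ℤ) + (u:ℕ))) (2*k - (((s:ℕ):ℤ) + (r:ℕ)))) := ⟨_, rfl⟩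
    have e1 : (∑ p : Fin (ℓ - 1), fusionCoeff ℓ s t p * fusionCoeff ℓ p u r)
        = if A ≤ B then (B - A)/2 + 1 else 0 := by
      have hA0 : 0 ≤ A := by clear hB hA' hB'; omega
      have hBk : min B (((ℓ - 1 : ℕ) : ℤ) - 1) = B := by clear hA hA' hB'; omega
      trans (∑ p : Fin (ℓ - 1), (fun m : ℕ =>
          if A ≤ (m:ℤ) ∧ (m:ℤ) ≤ B ∧ (m:ℤ) % 2 = A % 2 then (1:ℤ) else 0) (p : ℕ))
      · refine Finset.sum_congr rfl fun p _ => ?_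
        rw [coeff_iff ℓ hℓ, coeff_iff ℓ hℓ, mul_ind]
        refine if_congr ?_ rfl rfl
        have hp := p.isLt
        clear hA' hB' hA0 hBk
        have h1 : A ≤ ((p:ℕ):ℤ) ↔ ((s:ℕ) ≤ (t:ℕ) + p ∧ (t:ℕ) ≤ (s:ℕ) + p ∧
            (u:ℕ) ≤ (r:ℕ) + p ∧ (r:ℕ) ≤ (u:ℕ) + p) := by clear hB; omega
        have h2 : ((p:ℕ):ℤ) ≤ B ↔ ((p:ℕ) ≤ (s:ℕ) + t ∧ (p:ℕ) ≤ (u:ℕ) + r ∧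
            (s:ℕ) + t + p ≤ 2 * (ℓ - 2) ∧ (u:ℕ) + r + p ≤ 2 * (ℓ - 2)) := by clear hA; omega
        have h3 : ((p:ℕ):ℤ) % 2 = A % 2 ↔ ((s:ℕ) + t + p) % 2 = 0 := by clear hB; omega
        rw [h1, h2, h3]
        omega
      · rw [Fin.sum_univ_eq_sum_range (fun m : ℕ =>
          if A ≤ (m:ℤ) ∧ (m:ℤ) ≤ B ∧ (m:ℤ) % 2 = A % 2 then (1:ℤ) else 0),
          countLem A B hA0, hBk]
    have e2 : (∑ q : Fin (ℓ - 1), fusionCoeff ℓ t u q * fusionCoeff ℓ s q r)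
        = if A' ≤ B' then (B' - A')/2 + 1 else 0 := by
      have hA0' : 0 ≤ A' := by clear hB hA hB'; omega
      have hBk' : min B' (((ℓ - 1 : ℕ) : ℤ) - 1) = B' := by clear hA hA' hB; omega
      trans (∑ q : Fin (ℓ - 1), (fun m : ℕ =>
          if A' ≤ (m:ℤ) ∧ (m:ℤ) ≤ B' ∧ (m:ℤ) % 2 = A' % 2 then (1:ℤ) else 0) (q : ℕ))
      · refine Finset.sum_congr rfl fun q _ => ?_
        rw [coeff_iff ℓ hℓ, coeff_iff ℓ hℓ, mul_ind]
        refine if_congr ?_ rfl rfl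
        have hq := q.isLt
        clear hA hB hA0' hBk'
        have h1 : A' ≤ ((q:ℕ):ℤ) ↔ ((t:ℕ) ≤ (u:ℕ) + q ∧ (u:ℕ) ≤ (t:ℕ) + q ∧
            (s:ℕ) ≤ (r:ℕ) + q ∧ (r:ℕ) ≤ (s:ℕ) + q) := by clear hB'; omega
        have h2 : ((q:ℕ):ℤ) ≤ B' ↔ ((q:ℕ) ≤ (t:ℕ) + u ∧ (q:ℕ) ≤ (s:ℕ) + r ∧
            (t:ℕ) + u + q ≤ 2 * (ℓ - 2) ∧ (s:ℕ) + r + q ≤ 2 * (ℓ - 2)) := by clear hA'; omega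
        have h3 : ((q:ℕ):ℤ) % 2 = A' % 2 ↔ ((t:ℕ) + u + q) % 2 = 0 := by clear hB'; omega
        rw [h1, h2, h3]
        omega
      · rw [Fin.sum_univ_eq_sum_range (fun m : ℕ =>
          if A' ≤ (m:ℤ) ∧ (m:ℤ) ≤ B' ∧ (m:ℤ) % 2 = A' % 2 then (1:ℤ) else 0),
          countLem A' B' hA0', hBk']
    rw [e1, e2]
    have hd : B - A = B' - A' := by rw [hA, hB, hA', hB']; exact diffLem k _ _ _ _
    have hiff : A ≤ B ↔ A' ≤ B' := by constructor <;> intro h <;> linarith [hd]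
    exact if_congr hiff (by rw [hd]) rfl
  · simp only [coeff_iff ℓ hℓ, mul_ind]
    rw [Finset.sum_eq_zero, Finset.sum_eq_zero]
    · intro q _; rw [if_neg]; omega
    · intro p _; rw [if_neg]; omega

lemma coeff_comm (ℓ : ℕ) (hℓ : 3 ≤ ℓ) (s t r : Fin (ℓ - 1)) :
    fusionCoeff ℓ s t r = fusionCoeff ℓ t s r := by
  unfold fusionCoeff
  refine if_congr ?_ rfl rfl
  have := s.isLt; have := t.isLt; have := r.isLt
  omega

theorem stmt_18 (ℓ : ℕ) (hℓ : 3 ≤ ℓ) (x y z : Fin (ℓ - 1) → ℤ) :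
    fusionMul ℓ x y = fusionMul ℓ y x ∧
    fusionMul ℓ (fusionMul ℓ x y) z = fusionMul ℓ x (fusionMul ℓ y z) := by
  constructor
  · funext r
    simp only [fusionMul]
    rw [Finset.sum_comm]
    exact Finset.sum_congr rfl fun a _ => Finset.sum_congr rfl fun b _ => by
      rw [coeff_comm ℓ hℓ]; ring
  · funext r
    simp only [fusionMul]
    have hL : (∑ p : Fin (ℓ - 1), ∑ u : Fin (ℓ - 1),
          (∑ s : Fin (ℓ - 1), ∑ t : Fin (ℓ - 1), x s * y t * fusionCoeff ℓ s t p)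
            * z u * fusionCoeff ℓ p u r)
        = ∑ s : Fin (ℓ - 1), ∑ t : Fin (ℓ - 1), ∑ u : Fin (ℓ - 1),
            x s * y t * z u * ∑ p : Fin (ℓ - 1), fusionCoeff ℓ s t p * fusionCoeff ℓ p u r := by
      calc (∑ p : Fin (ℓ - 1), ∑ u : Fin (ℓ - 1),
          (∑ s : Fin (ℓ - 1), ∑ t : Fin (ℓ - 1), x s * y t * fusionCoeff ℓ s t p)
            * z u * fusionCoeff ℓ p u r)
          = ∑ p : Fin (ℓ - 1), ∑ u : Fin (ℓ - 1), ∑ s : Fin (ℓ - 1), ∑ t : Fin (ℓ - 1),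
              x s * y t * z u * (fusionCoeff ℓ s t p * fusionCoeff ℓ p u r) := by
            refine Finset.sum_congr rfl fun p _ => Finset.sum_congr rfl fun u _ => ?_
            simp only [Finset.sum_mul]
            exact Finset.sum_congr rfl fun a _ => Finset.sum_congr rfl fun b _ => by ring
        _ = ∑ u : Fin (ℓ - 1), ∑ p : Fin (ℓ - 1), ∑ s : Fin (ℓ - 1), ∑ t : Fin (ℓ - 1),
              x s * y t * z u * (fusionCoeff ℓ s t p * fusionCoeff ℓ p u r) := Finset.sum_comm
        _ = ∑ u : Fin (ℓ - 1), ∑ s : Fin (ℓ - 1), ∑ p : Fin (ℓ - 1), ∑ t : Fin (ℓ - 1),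
              x s * y t * z u * (fusionCoeff ℓ s t p * fusionCoeff ℓ p u r) :=
            Finset.sum_congr rfl fun u _ => Finset.sum_comm
        _ = ∑ u : Fin (ℓ - 1), ∑ s : Fin (ℓ - 1), ∑ t : Fin (ℓ - 1), ∑ p : Fin (ℓ - 1),
              x s * y t * z u * (fusionCoeff ℓ s t p * fusionCoeff ℓ p u r) :=
            Finset.sum_congr rfl fun u _ => Finset.sum_congr rfl fun s _ => Finset.sum_comm
        _ = ∑ s : Fin (ℓ - 1), ∑ u : Fin (ℓ - 1), ∑ t : Fin (ℓ - 1), ∑ p : Fin (ℓ - 1),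
              x s * y t * z u * (fusionCoeff ℓ s t p * fusionCoeff ℓ p u r) := Finset.sum_comm
        _ = ∑ s : Fin (ℓ - 1), ∑ t : Fin (ℓ - 1), ∑ u : Fin (ℓ - 1), ∑ p : Fin (ℓ - 1),
              x s * y t * z u * (fusionCoeff ℓ s t p * fusionCoeff ℓ p u r) :=
            Finset.sum_congr rfl fun s _ => Finset.sum_comm
        _ = ∑ s : Fin (ℓ - 1), ∑ t : Fin (ℓ - 1), ∑ u : Fin (ℓ - 1),
              x s * y t * z u * ∑ p : Fin (ℓ - 1), fusionCoeff ℓ s t p * fusionCoeff ℓ p u r :=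
            Finset.sum_congr rfl fun s _ => Finset.sum_congr rfl fun t _ =>
              Finset.sum_congr rfl fun u _ => (Finset.mul_sum _ _ _).symm
    have hR : (∑ s : Fin (ℓ - 1), ∑ q : Fin (ℓ - 1),
          x s * (∑ t : Fin (ℓ - 1), ∑ u : Fin (ℓ - 1), y t * z u * fusionCoeff ℓ t u q)
            * fusionCoeff ℓ s q r)
        = ∑ s : Fin (ℓ - 1), ∑ t : Fin (ℓ - 1), ∑ u : Fin (ℓ - 1),
            x s * y t * z u * ∑ q : Fin (ℓ - 1), fusionCoeff ℓ t u q * fusionCoeff ℓ s q r := by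
      calc (∑ s : Fin (ℓ - 1), ∑ q : Fin (ℓ - 1),
          x s * (∑ t : Fin (ℓ - 1), ∑ u : Fin (ℓ - 1), y t * z u * fusionCoeff ℓ t u q)
            * fusionCoeff ℓ s q r)
          = ∑ s : Fin (ℓ - 1), ∑ q : Fin (ℓ - 1), ∑ t : Fin (ℓ - 1), ∑ u : Fin (ℓ - 1),
              x s * y t * z u * (fusionCoeff ℓ t u q * fusionCoeff ℓ s q r) := by
            refine Finset.sum_congr rfl fun s _ => Finset.sum_congr rfl fun q _ => ?_
            simp only [Finset.mul_sum, Finset.sum_mul]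
            exact Finset.sum_congr rfl fun a _ => Finset.sum_congr rfl fun b _ => by ring
        _ = ∑ s : Fin (ℓ - 1), ∑ t : Fin (ℓ - 1), ∑ q : Fin (ℓ - 1), ∑ u : Fin (ℓ - 1),
              x s * y t * z u * (fusionCoeff ℓ t u q * fusionCoeff ℓ s q r) :=
            Finset.sum_congr rfl fun s _ => Finset.sum_comm
        _ = ∑ s : Fin (ℓ - 1), ∑ t : Fin (ℓ - 1), ∑ u : Fin (ℓ - 1), ∑ q : Fin (ℓ - 1),
              x s * y t * z u * (fusionCoeff ℓ t u q * fusionCoeff ℓ s q r) :=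
            Finset.sum_congr rfl fun s _ => Finset.sum_congr rfl fun t _ => Finset.sum_comm
        _ = ∑ s : Fin (ℓ - 1), ∑ t : Fin (ℓ - 1), ∑ u : Fin (ℓ - 1),
              x s * y t * z u * ∑ q : Fin (ℓ - 1), fusionCoeff ℓ t u q * fusionCoeff ℓ s q r :=
            Finset.sum_congr rfl fun s _ => Finset.sum_congr rfl fun t _ =>
              Finset.sum_congr rfl fun u _ => (Finset.mul_sum _ _ _).symm
    rw [hL, hR]
    exact Finset.sum_congr rfl fun s _ => Finset.sum_congr rfl fun t _ =>
      Finset.sum_congr rfl fun u _ => by rw [core ℓ hℓ]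
end
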